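/- Let f, g : ℍ → ℂ be smooth functions, k, k₁, k₂ ∈ (1/2)ℤ, and let S = [u₁,u₂] × [v₁,v₂] ⊂ ℍ be a compact rectangle (0 < v₁ ≤ v₂), with counterclockwise oriented boundary ∂S. Then: (i) ∫_S f·(R_{−2−k} g) dμ(τ) + ∫_S (R_k f)·g dμ(τ) = −∮_{∂S} (f·g/v²) dτ̄, and (ii) ∫_S f·(L_{k₁} g) dμ(τ) + ∫_S (L_{k₂} f)·g dμ(τ) = −∮_{∂S} f·g dτ. -/

import Mathlib

noncomputable section

/-- Partial derivative of `f : ℂ → ℂ` in the direction of the real axis. -/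
def du (f : ℂ → ℂ) (τ : ℂ) : ℂ := fderiv ℝ f τ 1

/-- Partial derivative of `f : ℂ → ℂ` in the direction of the imaginary axis. -/
def dv (f : ℂ → ℂ) (τ : ℂ) : ℂ := fderiv ℝ f τ Complex.I

/-- Wirtinger derivative `∂/∂τ = (∂_u − i ∂_v)/2`. -/
def dTau (f : ℂ → ℂ) (τ : ℂ) : ℂ := (du f τ - Complex.I * dv f τ) / 2

/-- Wirtinger derivative `∂/∂τ̄ = (∂_u + i ∂_v)/2`. -/
def dTauBar (f : ℂ → ℂ) (τ : ℂ) : ℂ := (du f τ + Complex.I * dv f τ) / 2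

/-- Maass raising operator `R_k = 2i ∂/∂τ + k/v`. -/
def Rop (k : ℝ) (f : ℂ → ℂ) (τ : ℂ) : ℂ :=
  2 * Complex.I * dTau f τ + ((k : ℂ) / (τ.im : ℂ)) * f τ

/-- Maass lowering operator `L_k = −2iv² ∂/∂τ̄` (independent of the weight `k`). -/
def Lop (f : ℂ → ℂ) (τ : ℂ) : ℂ :=
  -2 * Complex.I * (τ.im : ℂ) ^ 2 * dTauBar f τ

/-- Integral over the rectangle `[u₁,u₂] × [v₁,v₂]` with respect to the hyperbolic
measure `dμ(τ) = du dv / v²`. -/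
def rectInt (u₁ u₂ v₁ v₂ : ℝ) (F : ℂ → ℂ) : ℂ :=
  ∫ v in v₁..v₂, ∫ u in u₁..u₂, F (u + v * Complex.I) / ((v : ℂ) ^ 2)

/-- Contour integral `∮_{∂S} F dτ` over the counterclockwise boundary of the
rectangle `[u₁,u₂] × [v₁,v₂]`. -/
def contourDTau (u₁ u₂ v₁ v₂ : ℝ) (F : ℂ → ℂ) : ℂ :=
  (∫ u in u₁..u₂, F (u + v₁ * Complex.I))
    + Complex.I * (∫ v in v₁..v₂, F (u₂ + v * Complex.I))
    - (∫ u in u₁..u₂, F (u + v₂ * Complex.I))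
    - Complex.I * (∫ v in v₁..v₂, F (u₁ + v * Complex.I))

/-- Contour integral `∮_{∂S} F dτ̄` over the counterclockwise boundary of the
rectangle `[u₁,u₂] × [v₁,v₂]`. -/
def contourDTauBar (u₁ u₂ v₁ v₂ : ℝ) (F : ℂ → ℂ) : ℂ :=
  (∫ u in u₁..u₂, F (u + v₁ * Complex.I))
    - Complex.I * (∫ v in v₁..v₂, F (u₂ + v * Complex.I))
    - (∫ u in u₁..u₂, F (u + v₂ * Complex.I))
    + Complex.I * (∫ v in v₁..v₂, F (u₁ + v * Complex.I))

open MeasureTheory Complex Set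

namespace StokesRL


lemma hasDerivAt_horiz (F : ℂ → ℂ) {u v : ℝ} (hF : DifferentiableAt ℝ F ((u:ℂ) + v * I)) :
    HasDerivAt (fun x : ℝ => F ((x:ℂ) + v * I)) (du F ((u:ℂ) + v * I)) u := by
  have hl : HasDerivAt (fun x : ℝ => (x:ℂ) + (v:ℂ) * I) 1 u := by
    simpa using (Complex.ofRealCLM.hasDerivAt (x := u)).add_const ((v:ℂ) * I)
  exact hF.hasFDerivAt.comp_hasDerivAt u hl

lemma hasDerivAt_vert (F : ℂ → ℂ) {u v : ℝ} (hF : DifferentiableAt ℝ F ((u:ℂ) + v * I)) :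
    HasDerivAt (fun y : ℝ => F ((u:ℂ) + y * I)) (dv F ((u:ℂ) + v * I)) v := by
  have hl : HasDerivAt (fun y : ℝ => (u:ℂ) + (y:ℂ) * I) I v := by
    simpa using ((Complex.ofRealCLM.hasDerivAt (x := v)).mul_const I).const_add (u:ℂ)
  exact hF.hasFDerivAt.comp_hasDerivAt v hl

lemma continuousAt_du (F : ℂ → ℂ) (hF : ∀ τ : ℂ, 0 < τ.im → ContDiffAt ℝ (⊤ : ℕ∞) F τ)
    {τ : ℂ} (hτ : 0 < τ.im) : ContinuousAt (du F) τ := by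
  have h1 : ContDiffAt ℝ (⊤ : ℕ∞) (fderiv ℝ F) τ := (hF τ hτ).fderiv_right (by simp)
  exact ((ContinuousLinearMap.apply ℝ ℂ (1:ℂ)).continuous.continuousAt).comp h1.continuousAt

lemma continuousAt_dv (F : ℂ → ℂ) (hF : ∀ τ : ℂ, 0 < τ.im → ContDiffAt ℝ (⊤ : ℕ∞) F τ)
    {τ : ℂ} (hτ : 0 < τ.im) : ContinuousAt (dv F) τ := by
  have h1 : ContDiffAt ℝ (⊤ : ℕ∞) (fderiv ℝ F) τ := (hF τ hτ).fderiv_right (by simp)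
  exact ((ContinuousLinearMap.apply ℝ ℂ Complex.I).continuous.continuousAt).comp h1.continuousAt

/-- iterated interval integral over a rectangle equals the product set integral. -/
lemma prodIoc (G : ℝ × ℝ → ℂ) (a b a' b' : ℝ)
    (hG : IntegrableOn G (Ioc a b ×ˢ Ioc a' b')) :
    (∫ p in Ioc a b ×ˢ Ioc a' b', G p) = ∫ x in Ioc a b, ∫ y in Ioc a' b', G (x, y) := by
  rw [Measure.volume_eq_prod] at hG ⊢
  exact setIntegral_prod G hG

lemma green (H : ℂ → ℂ) (hH : ∀ τ : ℂ, 0 < τ.im → ContDiffAt ℝ (⊤ : ℕ∞) H τ)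
    (u₁ u₂ v₁ v₂ : ℝ) (hu : u₁ ≤ u₂) (hv : v₁ ≤ v₂) (hv₁ : 0 < v₁) (c : ℂ) :
    (∫ p in Ioc v₁ v₂ ×ˢ Ioc u₁ u₂,
        (c * du H ((p.2:ℂ) + (p.1:ℂ) * I) + dv H ((p.2:ℂ) + (p.1:ℂ) * I)))
      = c * ((∫ v in v₁..v₂, H ((u₂:ℂ) + v * I)) - ∫ v in v₁..v₂, H ((u₁:ℂ) + v * I))
        + ((∫ u in u₁..u₂, H ((u:ℂ) + v₂ * I)) - ∫ u in u₁..u₂, H ((u:ℂ) + v₁ * I)) := by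
  have hmap : Continuous (fun p : ℝ × ℝ => (p.2:ℂ) + (p.1:ℂ) * I) := by fun_prop
  have hmap' : Continuous (fun p : ℝ × ℝ => (p.1:ℂ) + (p.2:ℂ) * I) := by fun_prop
  have hK : IsCompact (Icc v₁ v₂ ×ˢ Icc u₁ u₂) := isCompact_Icc.prod isCompact_Icc
  have hK' : IsCompact (Icc u₁ u₂ ×ˢ Icc v₁ v₂) := isCompact_Icc.prod isCompact_Icc
  have hdiff : ∀ τ : ℂ, 0 < τ.im → DifferentiableAt ℝ H τ :=
    fun τ hτ => (hH τ hτ).differentiableAt (by simp)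
  have hcontH : ∀ τ : ℂ, 0 < τ.im → ContinuousAt H τ := fun τ hτ => (hdiff τ hτ).continuousAt
  have hDu : ContinuousOn (fun p : ℝ × ℝ => du H ((p.2:ℂ) + (p.1:ℂ) * I)) (Icc v₁ v₂ ×ˢ Icc u₁ u₂) := by
    intro p hp
    have h1 : 0 < ((p.2:ℂ) + (p.1:ℂ) * I).im := by simp; linarith [hp.1.1]
    exact ((continuousAt_du H hH h1).comp (x := p) hmap.continuousAt).continuousWithinAt
  have hDv : ContinuousOn (fun p : ℝ × ℝ => dv H ((p.2:ℂ) + (p.1:ℂ) * I)) (Icc v₁ v₂ ×ˢ Icc u₁ u₂) := by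
    intro p hp
    have h1 : 0 < ((p.2:ℂ) + (p.1:ℂ) * I).im := by simp; linarith [hp.1.1]
    exact ((continuousAt_dv H hH h1).comp (x := p) hmap.continuousAt).continuousWithinAt
  have hDv' : ContinuousOn (fun p : ℝ × ℝ => dv H ((p.1:ℂ) + (p.2:ℂ) * I)) (Icc u₁ u₂ ×ˢ Icc v₁ v₂) := by
    intro p hp
    have h1 : 0 < ((p.1:ℂ) + (p.2:ℂ) * I).im := by simp; linarith [hp.2.1]
    exact ((continuousAt_dv H hH h1).comp (x := p) hmap'.continuousAt).continuousWithinAt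
  have hQ : (Ioc v₁ v₂ ×ˢ Ioc u₁ u₂ : Set (ℝ × ℝ)) ⊆ Icc v₁ v₂ ×ˢ Icc u₁ u₂ :=
    prod_mono Ioc_subset_Icc_self Ioc_subset_Icc_self
  have hQ' : (Ioc u₁ u₂ ×ˢ Ioc v₁ v₂ : Set (ℝ × ℝ)) ⊆ Icc u₁ u₂ ×ˢ Icc v₁ v₂ :=
    prod_mono Ioc_subset_Icc_self Ioc_subset_Icc_self
  have hDuint : IntegrableOn (fun p : ℝ × ℝ => du H ((p.2:ℂ) + (p.1:ℂ) * I))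
      (Ioc v₁ v₂ ×ˢ Ioc u₁ u₂) := ((hDu.integrableOn_compact hK).mono_set hQ)
  have hDvint : IntegrableOn (fun p : ℝ × ℝ => dv H ((p.2:ℂ) + (p.1:ℂ) * I))
      (Ioc v₁ v₂ ×ˢ Ioc u₁ u₂) := ((hDv.integrableOn_compact hK).mono_set hQ)
  have hDvint' : IntegrableOn (fun p : ℝ × ℝ => dv H ((p.1:ℂ) + (p.2:ℂ) * I))
      (Ioc u₁ u₂ ×ˢ Ioc v₁ v₂) := ((hDv'.integrableOn_compact hK').mono_set hQ')
  have hlineV : ∀ u : ℝ, IntegrableOn (fun v : ℝ => H ((u:ℂ) + (v:ℂ) * I)) (Ioc v₁ v₂) := by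
    intro u
    apply (ContinuousOn.integrableOn_compact isCompact_Icc ?_).mono_set Ioc_subset_Icc_self
    intro v hv'
    have h1 : 0 < ((u:ℂ) + (v:ℂ) * I).im := by simp; linarith [hv'.1]
    exact ((hcontH _ h1).comp (x := v) (by fun_prop)).continuousWithinAt
  have hlineU : ∀ v : ℝ, 0 < v → IntegrableOn (fun u : ℝ => H ((u:ℂ) + (v:ℂ) * I)) (Ioc u₁ u₂) := by
    intro v hv0
    apply (ContinuousOn.integrableOn_compact isCompact_Icc ?_).mono_set Ioc_subset_Icc_self
    intro u hu'
    have h1 : 0 < ((u:ℂ) + (v:ℂ) * I).im := by simpa using hv0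
    exact ((hcontH _ h1).comp (x := u) (by fun_prop)).continuousWithinAt
  have ftcU : ∀ v : ℝ, v ∈ Ioc v₁ v₂ →
      (∫ u in Ioc u₁ u₂, du H ((u:ℂ) + (v:ℂ) * I)) = H ((u₂:ℂ) + v * I) - H ((u₁:ℂ) + v * I) := by
    intro v hv'
    have hv0 : 0 < v := lt_trans hv₁ hv'.1
    rw [← intervalIntegral.integral_of_le hu]
    apply intervalIntegral.integral_eq_sub_of_hasDerivAt
    · intro u _
      exact hasDerivAt_horiz H (hdiff _ (by simpa using hv0))
    · apply ContinuousOn.intervalIntegrable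
      intro u _
      exact ((continuousAt_du H hH (by simpa using hv0)).comp (x := u)
        (by fun_prop)).continuousWithinAt
  have ftcV : ∀ u : ℝ, u ∈ Ioc u₁ u₂ →
      (∫ v in Ioc v₁ v₂, dv H ((u:ℂ) + (v:ℂ) * I)) = H ((u:ℂ) + v₂ * I) - H ((u:ℂ) + v₁ * I) := by
    intro u _
    rw [← intervalIntegral.integral_of_le hv]
    apply intervalIntegral.integral_eq_sub_of_hasDerivAt
    · intro v hv'
      have hv0 : 0 < v := by
        rw [uIcc_of_le hv] at hv'
        linarith [hv'.1]
      exact hasDerivAt_vert H (hdiff _ (by simpa using hv0))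
    · apply ContinuousOn.intervalIntegrable
      intro v hv'
      have hv0 : 0 < v := by
        rw [uIcc_of_le hv] at hv'
        linarith [hv'.1]
      exact ((continuousAt_dv H hH (by simpa using hv0)).comp (x := v)
        (by fun_prop)).continuousWithinAt
  have eDu : (∫ p in Ioc v₁ v₂ ×ˢ Ioc u₁ u₂, du H ((p.2:ℂ) + (p.1:ℂ) * I))
      = (∫ v in v₁..v₂, H ((u₂:ℂ) + v * I)) - ∫ v in v₁..v₂, H ((u₁:ℂ) + v * I) := by
    rw [prodIoc _ _ _ _ _ hDuint]
    rw [setIntegral_congr_fun measurableSet_Ioc ftcU]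
    rw [MeasureTheory.integral_sub (hlineV u₂) (hlineV u₁)]
    rw [← intervalIntegral.integral_of_le hv, ← intervalIntegral.integral_of_le hv]
  have eDv : (∫ p in Ioc v₁ v₂ ×ˢ Ioc u₁ u₂, dv H ((p.2:ℂ) + (p.1:ℂ) * I))
      = (∫ u in u₁..u₂, H ((u:ℂ) + v₂ * I)) - ∫ u in u₁..u₂, H ((u:ℂ) + v₁ * I) := by
    have eswap : (∫ p in Ioc v₁ v₂ ×ˢ Ioc u₁ u₂, dv H ((p.2:ℂ) + (p.1:ℂ) * I))
        = ∫ p in Ioc u₁ u₂ ×ˢ Ioc v₁ v₂, dv H ((p.1:ℂ) + (p.2:ℂ) * I) := by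
      rw [Measure.volume_eq_prod, ← Measure.prod_restrict, ← Measure.prod_restrict]
      exact (MeasureTheory.integral_prod_swap
        (fun p : ℝ × ℝ => dv H ((p.2:ℂ) + (p.1:ℂ) * I))).symm
    rw [eswap, prodIoc _ _ _ _ _ hDvint']
    rw [setIntegral_congr_fun measurableSet_Ioc ftcV]
    rw [MeasureTheory.integral_sub (hlineU v₂ (lt_of_lt_of_le hv₁ hv)) (hlineU v₁ hv₁),
      ← intervalIntegral.integral_of_le hu, ← intervalIntegral.integral_of_le hu]
  rw [MeasureTheory.integral_add (hDuint.const_mul c) hDvint,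
    MeasureTheory.integral_const_mul, eDu, eDv]

lemma mul_deriv (f g : ℂ → ℂ) {τ : ℂ} (hfd : DifferentiableAt ℝ f τ)
    (hgd : DifferentiableAt ℝ g τ) :
    du (fun z => f z * g z) τ = f τ * du g τ + g τ * du f τ ∧
    dv (fun z => f z * g z) τ = f τ * dv g τ + g τ * dv f τ := by
  have h := hfd.hasFDerivAt.mul hgd.hasFDerivAt
  constructor
  · rw [du, show (fun z => f z * g z) = f * g from rfl, h.fderiv]; simp [du, smul_eq_mul]
  · rw [dv, show (fun z => f z * g z) = f * g from rfl, h.fderiv]; simp [dv, smul_eq_mul]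

lemma invsq_deriv {τ : ℂ} (hτ : τ.im ≠ 0) :
    HasFDerivAt (fun z : ℂ => (((z.im : ℝ) : ℂ) ^ 2)⁻¹)
      (((ContinuousLinearMap.smulRight (1 : ℂ →L[ℂ] ℂ)
          (-(2 * ((τ.im:ℝ):ℂ) ^ 1) / (((τ.im:ℝ):ℂ) ^ 2) ^ 2)).restrictScalars ℝ).comp
        (Complex.ofRealCLM.comp Complex.imCLM)) τ := by
  have hne : (((τ.im:ℝ):ℂ)) ^ 2 ≠ 0 := pow_ne_zero 2 (by exact_mod_cast hτ)
  have h1 : HasDerivAt (fun z : ℂ => (z ^ 2)⁻¹)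
      (-(2 * ((τ.im:ℝ):ℂ) ^ 1) / (((τ.im:ℝ):ℂ) ^ 2) ^ 2) ((τ.im:ℝ):ℂ) :=
    (hasDerivAt_pow 2 _).inv hne
  have h2 := (h1.hasFDerivAt.restrictScalars ℝ).comp τ
    ((Complex.ofRealCLM.comp Complex.imCLM).hasFDerivAt)
  exact h2

lemma H1_deriv (f g : ℂ → ℂ) {τ : ℂ} (hτ : 0 < τ.im) (hfd : DifferentiableAt ℝ f τ)
    (hgd : DifferentiableAt ℝ g τ) :
    du (fun z => f z * g z / ((z.im : ℂ) ^ 2)) τ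
        = (f τ * du g τ + g τ * du f τ) / ((τ.im : ℂ) ^ 2) ∧
    dv (fun z => f z * g z / ((z.im : ℂ) ^ 2)) τ
        = (f τ * dv g τ + g τ * dv f τ) / ((τ.im : ℂ) ^ 2)
          - 2 * (f τ * g τ) / ((τ.im : ℂ) ^ 3) := by
  have hne : ((τ.im : ℝ) : ℂ) ≠ 0 := by
    exact_mod_cast ne_of_gt hτ
  have hw := invsq_deriv (ne_of_gt hτ)
  have hprod := hfd.hasFDerivAt.mul hgd.hasFDerivAt
  have hH := hprod.mul hw
  have hfun : (fun z : ℂ => f z * g z / ((z.im : ℂ) ^ 2))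
      = fun z : ℂ => (f z * g z) * ((((z.im : ℝ) : ℂ) ^ 2)⁻¹) := by
    funext z; rw [div_eq_mul_inv]
  have happly : ∀ w : ℂ, fderiv ℝ (fun z : ℂ => f z * g z / ((z.im : ℂ) ^ 2)) τ w
      = (f τ * g τ) * ((-(2 * ((τ.im:ℝ):ℂ) ^ 1) / (((τ.im:ℝ):ℂ) ^ 2) ^ 2) * ((w.im : ℝ) : ℂ))
        + ((((τ.im:ℝ):ℂ) ^ 2)⁻¹) * (f τ * (fderiv ℝ g τ w) + g τ * (fderiv ℝ f τ w)) := by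
    intro w
    rw [hfun, show (fun z : ℂ => f z * g z * (((z.im:ℝ):ℂ) ^ 2)⁻¹) = (f * g * fun z : ℂ => (((z.im:ℝ):ℂ) ^ 2)⁻¹) from rfl, hH.fderiv]
    simp only [ContinuousLinearMap.add_apply, ContinuousLinearMap.smul_apply,
      ContinuousLinearMap.coe_comp', ContinuousLinearMap.coe_restrictScalars', Function.comp_apply,
      Complex.imCLM_apply, Complex.ofRealCLM_apply, ContinuousLinearMap.smulRight_apply,
      ContinuousLinearMap.one_apply, smul_eq_mul, Pi.mul_apply]
    ring
  constructor
  · rw [du, happly 1]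
    simp only [Complex.one_im, Complex.ofReal_zero, mul_zero, zero_mul, add_zero, zero_add]
    rw [du, du]
    field_simp
  · rw [dv, happly Complex.I]
    simp only [Complex.I_im, Complex.ofReal_one, mul_one]
    rw [dv, dv]
    field_simp
    ring

lemma keyR (f g : ℂ → ℂ) {τ : ℂ} (hτ : 0 < τ.im) (hfd : DifferentiableAt ℝ f τ)
    (hgd : DifferentiableAt ℝ g τ) (k : ℝ) :
    f τ * Rop (-2 - k) g τ / ((τ.im : ℂ) ^ 2) + Rop k f τ * g τ / ((τ.im : ℂ) ^ 2)
      = Complex.I * du (fun z => f z * g z / ((z.im : ℂ) ^ 2)) τ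
        + dv (fun z => f z * g z / ((z.im : ℂ) ^ 2)) τ := by
  obtain ⟨h1, h2⟩ := H1_deriv f g hτ hfd hgd
  rw [h1, h2, Rop, Rop, dTau, dTau]
  have hne : ((τ.im : ℝ) : ℂ) ≠ 0 := by exact_mod_cast ne_of_gt hτ
  push_cast
  field_simp
  ring_nf
  simp only [Complex.I_sq]
  ring

lemma keyL (f g : ℂ → ℂ) {τ : ℂ} (hτ : 0 < τ.im) (hfd : DifferentiableAt ℝ f τ)
    (hgd : DifferentiableAt ℝ g τ) :
    f τ * Lop g τ / ((τ.im : ℂ) ^ 2) + Lop f τ * g τ / ((τ.im : ℂ) ^ 2)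
      = (-Complex.I) * du (fun z => f z * g z) τ + dv (fun z => f z * g z) τ := by
  obtain ⟨h1, h2⟩ := mul_deriv f g hfd hgd
  rw [h1, h2, Lop, Lop, dTauBar, dTauBar]
  have hne : ((τ.im : ℝ) : ℂ) ≠ 0 := by exact_mod_cast ne_of_gt hτ
  field_simp
  ring_nf
  simp only [Complex.I_sq]
  ring

lemma continuousAt_Rop (k : ℝ) (G : ℂ → ℂ) (hG : ∀ τ : ℂ, 0 < τ.im → ContDiffAt ℝ (⊤ : ℕ∞) G τ)
    {τ : ℂ} (hτ : 0 < τ.im) : ContinuousAt (Rop k G) τ := by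
  have h1 := continuousAt_du G hG hτ
  have h2 := continuousAt_dv G hG hτ
  have h3 : ContinuousAt G τ := ((hG τ hτ).differentiableAt (by simp)).continuousAt
  have h4 : ContinuousAt (fun z : ℂ => ((z.im : ℝ) : ℂ)) τ := by fun_prop
  have hne : ((τ.im : ℝ) : ℂ) ≠ 0 := by exact_mod_cast ne_of_gt hτ
  unfold Rop dTau
  exact (continuousAt_const.mul ((h1.sub (continuousAt_const.mul h2)).div_const 2)).add
    ((continuousAt_const.div h4 hne).mul h3)

lemma continuousAt_Lop (G : ℂ → ℂ) (hG : ∀ τ : ℂ, 0 < τ.im → ContDiffAt ℝ (⊤ : ℕ∞) G τ)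
    {τ : ℂ} (hτ : 0 < τ.im) : ContinuousAt (Lop G) τ := by
  have h1 := continuousAt_du G hG hτ
  have h2 := continuousAt_dv G hG hτ
  unfold Lop dTauBar
  exact ((continuousAt_const.mul ((by fun_prop : ContinuousAt (fun z : ℂ => ((z.im : ℝ) : ℂ)) τ).pow 2))).mul
    ((h1.add (continuousAt_const.mul h2)).div_const 2)

/-- integrability of `p ↦ F₁ F₂ / v²` over the rectangle -/
lemma integrableP (F₁ F₂ : ℂ → ℂ) (hc₁ : ∀ τ : ℂ, 0 < τ.im → ContinuousAt F₁ τ)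
    (hc₂ : ∀ τ : ℂ, 0 < τ.im → ContinuousAt F₂ τ)
    (u₁ u₂ v₁ v₂ : ℝ) (hv₁ : 0 < v₁) :
    IntegrableOn (fun p : ℝ × ℝ => F₁ ((p.2:ℂ) + (p.1:ℂ) * I) * F₂ ((p.2:ℂ) + (p.1:ℂ) * I)
      / ((p.1:ℂ) ^ 2)) (Ioc v₁ v₂ ×ˢ Ioc u₁ u₂) := by
  apply (ContinuousOn.integrableOn_compact (isCompact_Icc.prod isCompact_Icc) ?_).mono_set
    (prod_mono Ioc_subset_Icc_self Ioc_subset_Icc_self)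
  intro p hp
  have hp1 : 0 < p.1 := lt_of_lt_of_le hv₁ hp.1.1
  have him : 0 < ((p.2:ℂ) + (p.1:ℂ) * I).im := by simpa using hp1
  have hcm : ContinuousAt (fun p : ℝ × ℝ => (p.2:ℂ) + (p.1:ℂ) * I) p := by fun_prop
  have hne : ((p.1:ℝ):ℂ) ^ 2 ≠ 0 := pow_ne_zero 2 (by exact_mod_cast ne_of_gt hp1)
  exact ((((hc₁ _ him).comp (x := p) hcm).mul ((hc₂ _ him).comp (x := p) hcm)).div
    (by fun_prop) hne).continuousWithinAt

lemma rect_eq (G : ℝ → ℝ → ℂ) (u₁ u₂ v₁ v₂ : ℝ) (hu : u₁ ≤ u₂) (hv : v₁ ≤ v₂)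
    (hint : IntegrableOn (fun p : ℝ × ℝ => G p.1 p.2) (Ioc v₁ v₂ ×ˢ Ioc u₁ u₂)) :
    (∫ v in v₁..v₂, ∫ u in u₁..u₂, G v u) = ∫ p in Ioc v₁ v₂ ×ˢ Ioc u₁ u₂, G p.1 p.2 := by
  rw [intervalIntegral.integral_of_le hv]
  simp only [intervalIntegral.integral_of_le hu]
  exact (prodIoc _ _ _ _ _ hint).symm


end StokesRL

open StokesRL in
/-- **Stokes' theorem for raising/lowering operators.**
For smooth `f, g` on the upper half plane, half-integers `k, k₁, k₂` and a compact
rectangle `S = [u₁,u₂] × [v₁,v₂] ⊂ ℍ`: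
(i) `∫_S f (R_{−2−k} g) dμ + ∫_S (R_k f) g dμ = −∮_{∂S} f g / v² dτ̄`, and
(ii) `∫_S f (L_{k₁} g) dμ + ∫_S (L_{k₂} f) g dμ = −∮_{∂S} f g dτ`. -/
theorem stokes_raising_lowering (f g : ℂ → ℂ)
    (hf : ∀ τ : ℂ, 0 < τ.im → ContDiffAt ℝ (⊤ : ℕ∞) f τ)
    (hg : ∀ τ : ℂ, 0 < τ.im → ContDiffAt ℝ (⊤ : ℕ∞) g τ)
    (k k₁ k₂ : ℝ) (hk : ∃ n : ℤ, k = (n : ℝ) / 2) (hk₁ : ∃ n : ℤ, k₁ = (n : ℝ) / 2)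
    (hk₂ : ∃ n : ℤ, k₂ = (n : ℝ) / 2)
    (u₁ u₂ v₁ v₂ : ℝ) (hu : u₁ ≤ u₂) (hv : v₁ ≤ v₂) (hv₁ : 0 < v₁) :
    (rectInt u₁ u₂ v₁ v₂ (fun τ => f τ * Rop (-2 - k) g τ)
        + rectInt u₁ u₂ v₁ v₂ (fun τ => Rop k f τ * g τ)
      = -contourDTauBar u₁ u₂ v₁ v₂ (fun τ => f τ * g τ / ((τ.im : ℂ) ^ 2))) ∧
    (rectInt u₁ u₂ v₁ v₂ (fun τ => f τ * Lop g τ)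
        + rectInt u₁ u₂ v₁ v₂ (fun τ => Lop f τ * g τ)
      = -contourDTau u₁ u₂ v₁ v₂ (fun τ => f τ * g τ)) := by
  have hdf : ∀ τ : ℂ, 0 < τ.im → DifferentiableAt ℝ f τ :=
    fun τ h => (hf τ h).differentiableAt (by simp)
  have hdg : ∀ τ : ℂ, 0 < τ.im → DifferentiableAt ℝ g τ :=
    fun τ h => (hg τ h).differentiableAt (by simp)
  have hcf : ∀ τ : ℂ, 0 < τ.im → ContinuousAt f τ := fun τ h => (hdf τ h).continuousAt
  have hcg : ∀ τ : ℂ, 0 < τ.im → ContinuousAt g τ := fun τ h => (hdg τ h).continuousAt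
  constructor
  · -- raising part
    have hH₁ : ∀ τ : ℂ, 0 < τ.im → ContDiffAt ℝ (⊤ : ℕ∞) (fun z => f z * g z / ((z.im : ℂ) ^ 2)) τ := by
      intro τ hτ
      have hden : ContDiff ℝ (⊤ : ℕ∞) (fun z : ℂ => ((z.im : ℂ))) :=
        Complex.ofRealCLM.contDiff.comp Complex.imCLM.contDiff
      have hne : ((τ.im : ℂ) ^ 2) ≠ 0 := pow_ne_zero 2 (by exact_mod_cast ne_of_gt hτ)
      have h1 : ContDiffAt ℝ (⊤ : ℕ∞) (fun z : ℂ => (f z * g z) * (((z.im : ℂ) ^ 2))⁻¹) τ :=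
        ((hf τ hτ).mul (hg τ hτ)).mul (((hden.pow 2).contDiffAt).inv hne)
      exact h1.congr_of_eventuallyEq (Filter.Eventually.of_forall fun z => div_eq_mul_inv _ _)
    have hint₁ := integrableP f (Rop (-2 - k) g) hcf
      (fun τ h => continuousAt_Rop (-2 - k) g hg h) u₁ u₂ v₁ v₂ hv₁
    have hint₂ := integrableP (Rop k f) g (fun τ h => continuousAt_Rop k f hf h) hcg
      u₁ u₂ v₁ v₂ hv₁
    have e₁ : rectInt u₁ u₂ v₁ v₂ (fun τ => f τ * Rop (-2 - k) g τ)
        = ∫ p in Ioc v₁ v₂ ×ˢ Ioc u₁ u₂,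
            f ((p.2:ℂ) + (p.1:ℂ) * I) * Rop (-2 - k) g ((p.2:ℂ) + (p.1:ℂ) * I) / ((p.1:ℂ) ^ 2) :=
      rect_eq (fun v u => f ((u:ℂ) + (v:ℂ) * I) * Rop (-2 - k) g ((u:ℂ) + (v:ℂ) * I) / ((v:ℂ) ^ 2))
        u₁ u₂ v₁ v₂ hu hv hint₁
    have e₂ : rectInt u₁ u₂ v₁ v₂ (fun τ => Rop k f τ * g τ)
        = ∫ p in Ioc v₁ v₂ ×ˢ Ioc u₁ u₂,
            Rop k f ((p.2:ℂ) + (p.1:ℂ) * I) * g ((p.2:ℂ) + (p.1:ℂ) * I) / ((p.1:ℂ) ^ 2) :=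
      rect_eq (fun v u => Rop k f ((u:ℂ) + (v:ℂ) * I) * g ((u:ℂ) + (v:ℂ) * I) / ((v:ℂ) ^ 2))
        u₁ u₂ v₁ v₂ hu hv hint₂
    rw [e₁, e₂, ← MeasureTheory.integral_add hint₁ hint₂]
    have e₃ : (∫ p in Ioc v₁ v₂ ×ˢ Ioc u₁ u₂,
        (f ((p.2:ℂ) + (p.1:ℂ) * I) * Rop (-2 - k) g ((p.2:ℂ) + (p.1:ℂ) * I) / ((p.1:ℂ) ^ 2)
          + Rop k f ((p.2:ℂ) + (p.1:ℂ) * I) * g ((p.2:ℂ) + (p.1:ℂ) * I) / ((p.1:ℂ) ^ 2)))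
        = ∫ p in Ioc v₁ v₂ ×ˢ Ioc u₁ u₂,
            (Complex.I * du (fun z => f z * g z / ((z.im : ℂ) ^ 2)) ((p.2:ℂ) + (p.1:ℂ) * I)
              + dv (fun z => f z * g z / ((z.im : ℂ) ^ 2)) ((p.2:ℂ) + (p.1:ℂ) * I)) := by
      apply setIntegral_congr_fun (measurableSet_Ioc.prod measurableSet_Ioc)
      intro p hp
      have hp1 : 0 < p.1 := lt_trans hv₁ hp.1.1
      have him : 0 < ((p.2:ℂ) + (p.1:ℂ) * I).im := by simpa using hp1
      have hkey := keyR f g him (hdf _ him) (hdg _ him) k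
      have him' : (((p.2:ℂ) + (p.1:ℂ) * I).im : ℝ) = p.1 := by simp
      rw [him'] at hkey
      exact hkey
    rw [e₃, green (fun z => f z * g z / ((z.im : ℂ) ^ 2)) hH₁ u₁ u₂ v₁ v₂ hu hv hv₁ Complex.I]
    rw [contourDTauBar]
    ring
  · -- lowering part
    have hH₂ : ∀ τ : ℂ, 0 < τ.im → ContDiffAt ℝ (⊤ : ℕ∞) (fun z => f z * g z) τ :=
      fun τ hτ => (hf τ hτ).mul (hg τ hτ)
    have hint₁ := integrableP f (Lop g) hcf (fun τ h => continuousAt_Lop g hg h) u₁ u₂ v₁ v₂ hv₁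
    have hint₂ := integrableP (Lop f) g (fun τ h => continuousAt_Lop f hf h) hcg u₁ u₂ v₁ v₂ hv₁
    have e₁ : rectInt u₁ u₂ v₁ v₂ (fun τ => f τ * Lop g τ)
        = ∫ p in Ioc v₁ v₂ ×ˢ Ioc u₁ u₂,
            f ((p.2:ℂ) + (p.1:ℂ) * I) * Lop g ((p.2:ℂ) + (p.1:ℂ) * I) / ((p.1:ℂ) ^ 2) :=
      rect_eq (fun v u => f ((u:ℂ) + (v:ℂ) * I) * Lop g ((u:ℂ) + (v:ℂ) * I) / ((v:ℂ) ^ 2))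
        u₁ u₂ v₁ v₂ hu hv hint₁
    have e₂ : rectInt u₁ u₂ v₁ v₂ (fun τ => Lop f τ * g τ)
        = ∫ p in Ioc v₁ v₂ ×ˢ Ioc u₁ u₂,
            Lop f ((p.2:ℂ) + (p.1:ℂ) * I) * g ((p.2:ℂ) + (p.1:ℂ) * I) / ((p.1:ℂ) ^ 2) :=
      rect_eq (fun v u => Lop f ((u:ℂ) + (v:ℂ) * I) * g ((u:ℂ) + (v:ℂ) * I) / ((v:ℂ) ^ 2))
        u₁ u₂ v₁ v₂ hu hv hint₂
    rw [e₁, e₂, ← MeasureTheory.integral_add hint₁ hint₂]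
    have e₃ : (∫ p in Ioc v₁ v₂ ×ˢ Ioc u₁ u₂,
        (f ((p.2:ℂ) + (p.1:ℂ) * I) * Lop g ((p.2:ℂ) + (p.1:ℂ) * I) / ((p.1:ℂ) ^ 2)
          + Lop f ((p.2:ℂ) + (p.1:ℂ) * I) * g ((p.2:ℂ) + (p.1:ℂ) * I) / ((p.1:ℂ) ^ 2)))
        = ∫ p in Ioc v₁ v₂ ×ˢ Ioc u₁ u₂,
            ((-Complex.I) * du (fun z => f z * g z) ((p.2:ℂ) + (p.1:ℂ) * I)
              + dv (fun z => f z * g z) ((p.2:ℂ) + (p.1:ℂ) * I)) := by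
      apply setIntegral_congr_fun (measurableSet_Ioc.prod measurableSet_Ioc)
      intro p hp
      have hp1 : 0 < p.1 := lt_trans hv₁ hp.1.1
      have him : 0 < ((p.2:ℂ) + (p.1:ℂ) * I).im := by simpa using hp1
      have hkey := keyL f g him (hdf _ him) (hdg _ him)
      have him' : (((p.2:ℂ) + (p.1:ℂ) * I).im : ℝ) = p.1 := by simp
      rw [him'] at hkey
      exact hkey
    rw [e₃, green (fun z => f z * g z) hH₂ u₁ u₂ v₁ v₂ hu hv hv₁ (-Complex.I)]
    rw [contourDTau]
    ring
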